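/- arXiv:2602.04122 — 10 statements merged into one kernel-verified Lean document; each statement's English description precedes it below -/
import Mathlib

section
/- Let φ : ℝ^n × ℝ^p → ℝ be a continuous convex function and let (x̄, ȳ) ∈ ℝ^n × ℝ^p. If α ∈ ℝ^n is a subgradient at x̄ of the partial function x ↦ φ(x, ȳ), i.e. φ(x, ȳ) ≥ φ(x̄, ȳ) + ⟨α, x − x̄⟩ for all x ∈ ℝ^n, then there exists β ∈ ℝ^p such that (α, β) is a subgradient of φ at (x̄, ȳ), i.e. φ(x, y) ≥ φ(x̄, ȳ) + ⟨α, x − x̄⟩ + ⟨β, y − ȳ⟩ for all (x, y) ∈ ℝ^n × ℝ^p. -/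
open RealInnerProductSpace

/-- Euclidean space ℝ^n. -/
abbrev Euc (n : ℕ) := EuclideanSpace ℝ (Fin n)

/-- Lemma 2.1: if `α` is a subgradient at `x̄` of the partial function `x ↦ φ (x, ȳ)`
of a continuous convex function `φ : ℝ^n × ℝ^p → ℝ`, then there exists `β ∈ ℝ^p`
such that `(α, β)` is a subgradient of `φ` at `(x̄, ȳ)`. -/
theorem stmt_0 {n p : ℕ}
    (φ : Euc n × Euc p → ℝ)
    (hconv : ConvexOn ℝ Set.univ φ) (hcont : Continuous φ)
    (xbar : Euc n) (ybar : Euc p)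
    (α : Euc n)
    (hα : ∀ x, φ (xbar, ybar) + ⟪α, x - xbar⟫ ≤ φ (x, ybar)) :
    ∃ β : Euc p,
      ∀ x y, φ (xbar, ybar) + ⟪α, x - xbar⟫ + ⟪β, y - ybar⟫ ≤ φ (x, y) := by
  classical
  set f : Euc n × Euc p → ℝ := fun q => φ q - φ (xbar, ybar) - ⟪α, q.1 - xbar⟫ with hf
  have hf0 : f (xbar, ybar) = 0 := by simp [hf]
  have hfnn : ∀ x, 0 ≤ f (x, ybar) := by
    intro x
    have := hα x
    simp only [hf]
    linarith
  have hfcont : Continuous f := by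
    apply (hcont.sub continuous_const).sub
    exact (continuous_const.inner ((continuous_fst).sub continuous_const))
  -- strict epigraph
  set S : Set ((Euc n × Euc p) × ℝ) := {q | f q.1 < q.2} with hS
  have hSopen : IsOpen S := by
    have : S = {q : (Euc n × Euc p) × ℝ | 0 < q.2 - f q.1} := by
      ext q; constructor <;> (intro h; simp only [hS, Set.mem_setOf_eq] at *) <;> linarith
    rw [this]
    exact isOpen_lt continuous_const ((continuous_snd).sub (hfcont.comp continuous_fst))
  have hSconv : Convex ℝ S := by
    intro q hq r hr a b ha hb hab
    simp only [hS, Set.mem_setOf_eq] at hq hr ⊢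
    have h1 := hconv.2 (Set.mem_univ q.1) (Set.mem_univ r.1) ha hb hab
    simp only [smul_eq_mul] at h1
    have h2 : ⟪α, (a • q.1 + b • r.1).1 - xbar⟫
        = a * ⟪α, q.1.1 - xbar⟫ + b * ⟪α, r.1.1 - xbar⟫ := by
      simp only [inner_sub_right, inner_add_right, inner_smul_right, Prod.fst_add,
        Prod.smul_fst]
      have h3 : (a + b) * ⟪α, xbar⟫ = ⟪α, xbar⟫ := by rw [hab, one_mul]
      ring_nf
      ring_nf at h3
      linarith
    have hfle : f ((a • q + b • r).1) ≤ a * f q.1 + b * f r.1 := by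
      have hq1 : (a • q + b • r).1 = a • q.1 + b • r.1 := by simp
      rw [hq1]
      simp only [hf]
      have hC : a * φ (xbar, ybar) + b * φ (xbar, ybar) = φ (xbar, ybar) := by
        rw [← add_mul, hab, one_mul]
      linarith [h1, h2, hC]
    have hsnd : (a • q + b • r).2 = a * q.2 + b * r.2 := by simp
    rw [hsnd]
    have e1 := mul_le_mul_of_nonneg_left hq.le ha
    have e2 := mul_le_mul_of_nonneg_left hr.le hb
    rcases eq_or_lt_of_le ha with haz | hapos
    · have e3 := mul_lt_mul_of_pos_left hr (show (0:ℝ) < b by linarith)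
      linarith
    · have e3 := mul_lt_mul_of_pos_left hq hapos
      linarith
  -- the affine set T
  set T : Set ((Euc n × Euc p) × ℝ) := Set.range (fun x : Euc n => ((x, ybar), (0:ℝ))) with hT
  have hTconv : Convex ℝ T := by
    intro q hq r hr a b ha hb hab
    obtain ⟨x1, rfl⟩ := hq
    obtain ⟨x2, rfl⟩ := hr
    exact ⟨a • x1 + b • x2, by simp [Prod.ext_iff, Convex.combo_self hab]⟩
  have hdisj : Disjoint S T := by
    rw [Set.disjoint_left]
    rintro q hqS ⟨x, rfl⟩
    simp only [hS, Set.mem_setOf_eq] at hqS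
    exact absurd hqS (not_lt.mpr (hfnn x))
  obtain ⟨L, u, hLS, hLT⟩ := geometric_hahn_banach_open hSconv hSopen hTconv hdisj
  -- decompose L
  set c : ℝ := L ((0, 0), 1) with hc
  have hsplit : ∀ (z : Euc n × Euc p) (t : ℝ), L (z, t) = L (z, 0) + t * c := by
    intro z t
    have : (z, t) = ((z, (0:ℝ)) + t • (((0:Euc n), (0:Euc p)), (1:ℝ))) := by
      simp [Prod.ext_iff]
    rw [this, map_add, map_smul, smul_eq_mul, hc]
  have hxsplit : ∀ (x : Euc n) (y : Euc p), L ((x, y), 0) = L ((x, 0), 0) + L ((0, y), 0) := by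
    intro x y
    have : ((x, y), (0:ℝ)) = (((x, (0:Euc p)), (0:ℝ)) + (((0:Euc n), y), (0:ℝ))) := by
      simp [Prod.ext_iff]
    rw [this, map_add]
  -- c < 0
  have hmemS : ∀ (z : Euc n × Euc p) (t : ℝ), f z < t → L (z, 0) + t * c < u := by
    intro z t ht
    have := hLS (z, t) ht
    rwa [hsplit] at this
  have hmemT : ∀ x : Euc n, u ≤ L ((x, ybar), 0) := by
    intro x
    exact hLT _ ⟨x, rfl⟩
  have hcneg : c < 0 := by
    have h1 := hmemS (xbar, ybar) 1 (by rw [hf0]; norm_num)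
    have h2 := hmemT xbar
    linarith
  -- the x-component of L vanishes
  have hxzero : ∀ x : Euc n, L ((x, 0), 0) = 0 := by
    intro x
    by_contra hne
    set K : ℝ := L ((0, ybar), 0) with hK
    have hbd : ∀ r : ℝ, u - K ≤ r * L ((x, 0), 0) := by
      intro r
      have := hmemT (r • x)
      rw [hxsplit] at this
      have hrs : L ((r • x, (0:Euc p)), (0:ℝ)) = r * L ((x, 0), 0) := by
        have : ((r • x, (0:Euc p)), (0:ℝ)) = r • ((x, (0:Euc p)), (0:ℝ)) := by
          simp [Prod.ext_iff]
        rw [this, map_smul, smul_eq_mul]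
      rw [hrs] at this
      linarith
    have := hbd ((u - K - 1) / L ((x, 0), 0))
    rw [div_mul_cancel₀ _ hne] at this
    linarith
  -- limit inequality
  have hkey : ∀ (z : Euc n × Euc p), L (z, 0) + f z * c ≤ u := by
    intro z
    by_contra hlt
    push_neg at hlt
    set ε : ℝ := (L (z, 0) + f z * c - u) / (-c) with hε
    have hεpos : 0 < ε := div_pos (by linarith) (by linarith)
    have := hmemS z (f z + ε) (by linarith)
    have hεc : ε * (-c) = L (z, 0) + f z * c - u := by
      rw [hε, div_mul_cancel₀]; linarith
    nlinarith
  -- construct β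
  set G : Euc p →L[ℝ] ℝ :=
    (-c)⁻¹ • (L.comp ((ContinuousLinearMap.inl ℝ (Euc n × Euc p) ℝ).comp
      (ContinuousLinearMap.inr ℝ (Euc n) (Euc p)))) with hG
  have hGval : ∀ y : Euc p, G y = (-c)⁻¹ * L ((0, y), 0) := by
    intro y; simp [hG]
  refine ⟨(InnerProductSpace.toDual ℝ (Euc p)).symm G, ?_⟩
  intro x y
  have hβ : ⟪(InnerProductSpace.toDual ℝ (Euc p)).symm G, y - ybar⟫ = G (y - ybar) := by
    rw [InnerProductSpace.toDual_symm_apply]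
  have h1 := hkey (x, y)
  have h2 := hmemT x
  rw [hxsplit, hxzero] at h1 h2
  have hcpos : (0:ℝ) < -c := by linarith
  have hfineq : G (y - ybar) ≤ f (x, y) := by
    rw [map_sub, hGval, hGval, ← mul_sub, inv_mul_le_iff₀ hcpos]
    nlinarith
  have hfval : f (x, y) = φ (x, y) - φ (xbar, ybar) - ⟪α, x - xbar⟫ := by simp only [hf]
  rw [hβ]
  linarith
end

section
/- Let f, g_1, …, g_m : ℝ^n × ℝ^p → ℝ be continuous convex functions, X ⊆ ℝ^n a nonempty compact convex set, and y_j ∈ ℝ^p fixed. Suppose x_j ∈ X satisfies g_i(x_j, y_j) ≤ 0 for all i, and there exist nonnegative multipliers λ_1, …, λ_m ≥ 0 with λ_i g_i(x_j, y_j) = 0 for all i, a subgradient α of x ↦ f(x, y_j) at x_j, and subgradients ξ_i of x ↦ g_i(x, y_j) at x_j (i = 1,…,m) such that −α − Σ_{i=1}^m λ_i ξ_i ∈ N(X, x_j). Then for every r > 0, every x ∈ X satisfying g_i(x_j, y_j) + r⟨ξ_i, x − x_j⟩ ≤ 0 for all i = 1,…,m also satisfies ⟨α, x − x_j⟩ ≥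 0. -/
open RealInnerProductSpace

/-- The normal cone of a set `A` at a point `x`. -/
def normalCone {E : Type*} [NormedAddCommGroup E] [InnerProductSpace ℝ E]
    (A : Set E) (x : E) : Set E :=
  {γ | ∀ z ∈ A, ⟪γ, z - x⟫ ≤ 0}

/-- Proposition 3.1: if `x_j ∈ X` is feasible, with KKT multipliers and subgradients
satisfying `-α - Σ λ_i ξ_i ∈ N(X, x_j)`, then for any `r > 0`, every `x ∈ X` with
`g_i(x_j, y_j) + r⟨ξ_i, x - x_j⟩ ≤ 0` for all `i` satisfies `⟨α, x - x_j⟩ ≥ 0`. -/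
theorem stmt_1 {n p m : ℕ}
    (f : Euc n × Euc p → ℝ) (g : Fin m → Euc n × Euc p → ℝ)
    (hf : ConvexOn ℝ Set.univ f) (hfc : Continuous f)
    (hg : ∀ i, ConvexOn ℝ Set.univ (g i)) (hgc : ∀ i, Continuous (g i))
    (X : Set (Euc n)) (hXne : X.Nonempty) (hXcp : IsCompact X) (hXcv : Convex ℝ X)
    (yj : Euc p) (xj : Euc n) (hxjX : xj ∈ X)
    (hfeas : ∀ i, g i (xj, yj) ≤ 0)
    (lam : Fin m → ℝ) (hlam : ∀ i, 0 ≤ lam i)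
    (hcomp : ∀ i, lam i * g i (xj, yj) = 0)
    (α : Euc n) (hα : ∀ x, f (xj, yj) + ⟪α, x - xj⟫ ≤ f (x, yj))
    (ξ : Fin m → Euc n)
    (hξ : ∀ i, ∀ x, g i (xj, yj) + ⟪ξ i, x - xj⟫ ≤ g i (x, yj))
    (hKKT : -α - ∑ i, lam i • ξ i ∈ normalCone X xj) :
    ∀ r > (0 : ℝ), ∀ x ∈ X,
      (∀ i, g i (xj, yj) + r * ⟪ξ i, x - xj⟫ ≤ 0) → 0 ≤ ⟪α, x - xj⟫ := by
  intro r hr x hxX hcon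
  have hN := hKKT x hxX
  have hsum : ∀ i, lam i * ⟪ξ i, x - xj⟫ ≤ 0 := by
    intro i
    rcases lt_or_eq_of_le (hlam i) with hpos | hzero
    · have hg0 : g i (xj, yj) = 0 := by
        have := hcomp i
        have := mul_eq_zero.mp this
        rcases this with h | h
        · exact absurd h (ne_of_gt hpos)
        · exact h
      have := hcon i
      rw [hg0, zero_add] at this
      have hle : ⟪ξ i, x - xj⟫ ≤ 0 := nonpos_of_mul_nonpos_right this hr
      exact mul_nonpos_of_nonneg_of_nonpos (hlam i) hle
    · rw [← hzero, zero_mul]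
  have hexp : ⟪-α - ∑ i, lam i • ξ i, x - xj⟫
      = -⟪α, x - xj⟫ - ∑ i, lam i * ⟪ξ i, x - xj⟫ := by
    simp [inner_sub_left, inner_neg_left, sum_inner, real_inner_smul_left,
      Finset.mul_sum, mul_assoc]
  rw [hexp] at hN
  have hsle : ∑ i, lam i * ⟪ξ i, x - xj⟫ ≤ 0 :=
    Finset.sum_nonpos fun i _ => hsum i
  linarith
end

section
/- Let f, g_1, …, g_m : ℝ^n × ℝ^p → ℝ be continuous convex functions, X ⊆ ℝ^n a nonempty compact convex set, and y_j ∈ ℝ^p fixed. Suppose x_j ∈ X satisfies g_i(x_j, y_j) ≤ 0 for all i, and there exist λ_1, …, λ_m ≥ 0 with λ_i g_i(x_j, y_j) = 0 for all i, a subgradient α of x ↦ f(x, y_j) at x_j, and subgradients ξ_i of x ↦ g_i(x, y_j) at x_j such that −α − Σ_{i=1}^m λ_i ξ_i ∈ N(X, x_j). Then for every fixed r > 0, the point x_j is an optimal solution of the linear program LP(r, y_j): minimize f(x_j, y_j) + ⟨α, x − x_j⟩ over x ∈ X subject to g_i(x_j, y_j) + r⟨ξ_i, x − x_j⟩ ≤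 0 (i = 1,…,m); that is, x_j is feasible for LP(r, y_j) and every feasible x satisfies f(x_j, y_j) + ⟨α, x − x_j⟩ ≥ f(x_j, y_j), so the optimal value of LP(r, y_j) is f(x_j, y_j). -/
open RealInnerProductSpace

/-- Proposition 3.2: under the KKT conditions at `x_j`, for every fixed `r > 0`
the point `x_j` is an optimal solution of the linear program `LP(r, y_j)`:
it is feasible, and every feasible `x ∈ X` satisfies
`f(x_j, y_j) + ⟨α, x - x_j⟩ ≥ f(x_j, y_j)`, so the optimal value is `f(x_j, y_j)`. -/
theorem stmt_2 {n p m : ℕ}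
    (f : Euc n × Euc p → ℝ) (g : Fin m → Euc n × Euc p → ℝ)
    (hf : ConvexOn ℝ Set.univ f) (hfc : Continuous f)
    (hg : ∀ i, ConvexOn ℝ Set.univ (g i)) (hgc : ∀ i, Continuous (g i))
    (X : Set (Euc n)) (hXne : X.Nonempty) (hXcp : IsCompact X) (hXcv : Convex ℝ X)
    (yj : Euc p) (xj : Euc n) (hxjX : xj ∈ X)
    (hfeas : ∀ i, g i (xj, yj) ≤ 0)
    (lam : Fin m → ℝ) (hlam : ∀ i, 0 ≤ lam i)
    (hcomp : ∀ i, lam i * g i (xj, yj) = 0)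
    (α : Euc n) (hα : ∀ x, f (xj, yj) + ⟪α, x - xj⟫ ≤ f (x, yj))
    (ξ : Fin m → Euc n)
    (hξ : ∀ i, ∀ x, g i (xj, yj) + ⟪ξ i, x - xj⟫ ≤ g i (x, yj))
    (hKKT : -α - ∑ i, lam i • ξ i ∈ normalCone X xj) :
    ∀ r > (0 : ℝ),
      (xj ∈ X ∧ ∀ i, g i (xj, yj) + r * ⟪ξ i, xj - xj⟫ ≤ 0) ∧
      (∀ x ∈ X, (∀ i, g i (xj, yj) + r * ⟪ξ i, x - xj⟫ ≤ 0) →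
        f (xj, yj) ≤ f (xj, yj) + ⟪α, x - xj⟫) := by
  intro r hr
  refine ⟨⟨hxjX, fun i => by simp [real_inner_self_eq_norm_sq]; simpa using hfeas i⟩, ?_⟩
  intro x hxX hfeasx
  have hN : ⟪-α - ∑ i, lam i • ξ i, x - xj⟫ ≤ 0 := hKKT x hxX
  have hsum : ∑ i, lam i * ⟪ξ i, x - xj⟫ ≤ 0 := by
    apply Finset.sum_nonpos
    intro i _
    have h1 : r * ⟪ξ i, x - xj⟫ ≤ -g i (xj, yj) := by linarith [hfeasx i]
    have h2 : lam i * (r * ⟪ξ i, x - xj⟫) ≤ lam i * (-g i (xj, yj)) :=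
      mul_le_mul_of_nonneg_left h1 (hlam i)
    have h3 : lam i * (-g i (xj, yj)) = 0 := by
      have := hcomp i; ring_nf; ring_nf at this; linarith
    nlinarith [hlam i]
  have hexp : ⟪-α - ∑ i, lam i • ξ i, x - xj⟫
      = -⟪α, x - xj⟫ - ∑ i, lam i * ⟪ξ i, x - xj⟫ := by
    rw [inner_sub_left, inner_neg_left, sum_inner]
    simp [real_inner_smul_left, Finset.mul_sum, mul_assoc]
  linarith
end

section
/- Let g_1, …, g_m : ℝ^n × ℝ^p → ℝ be convex functions, X ⊆ ℝ^n a nonempty compact convex set, Y ⊆ ℝ^p a closed convex set with Y ∩ ℤ^p finite and nonempty. Let (x_j, y_j) ∈ X × (Y ∩ ℤ^p) satisfy g_i(x_j, y_j) ≤ 0 for all i, and let (ξ_{j,i}, η_{j,i}) be a subgradient of g_i at (x_j, y_j) for each i. Define ρ_j as in the definition of the parameter ρ_j. Then every (x, y) ∈ X × (Y ∩ ℤ^p) with g_i(x, y) ≤ 0 for all i satisfies the linear cuts g_i(x_j, y_j) + ρ_j(⟨ξ_{j,i}, x − x_j⟩ + ⟨η_{j,i}, y − y_j⟩) ≤ 0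 for every i = 1,…,m. -/
open RealInnerProductSpace
open scoped Classical

/-- Validity of the linear cuts with the parameter `ρ_j` of (3.14): every point
`(x, y) ∈ X × (Y ∩ ℤ^p)` feasible for the nonlinear constraints satisfies the cuts
`g_i(x_j, y_j) + ρ_j(⟨ξ_{j,i}, x - x_j⟩ + ⟨η_{j,i}, y - y_j⟩) ≤ 0` for all `i`. -/
theorem stmt_4 {n p m : ℕ}
    (g : Fin m → Euc n × Euc p → ℝ)
    (hg : ∀ i, ConvexOn ℝ Set.univ (g i))
    (X : Set (Euc n)) (hXne : X.Nonempty) (hXcp : IsCompact X) (hXcv : Convex ℝ X)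
    (Y : Set (Euc p)) (hYcl : IsClosed Y) (hYcv : Convex ℝ Y)
    (Yint : Set (Euc p)) (hYint : Yint = {y ∈ Y | ∀ k, ∃ z : ℤ, y k = (z : ℝ)})
    (hYfin : Yint.Finite) (hYne : Yint.Nonempty)
    (xj : Euc n) (yj : Euc p) (hxj : xj ∈ X) (hyj : yj ∈ Yint)
    (hfeas : ∀ i, g i (xj, yj) ≤ 0)
    (ξ : Fin m → Euc n) (η : Fin m → Euc p)
    (hsub : ∀ i, ∀ x y, g i (xj, yj) + ⟪ξ i, x - xj⟫ + ⟪η i, y - yj⟫ ≤ g i (x, y))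
    (J : Set (Fin m)) (hJ : J = {i | g i (xj, yj) < 0})
    (Pi gmax ρ : ℝ)
    (hPi : J.Nonempty → IsGreatest
      {v | ∃ i ∈ J, ∃ x ∈ X, ∃ y ∈ Yint, v = ⟪ξ i, x - xj⟫ + ⟪η i, y - yj⟫} Pi)
    (hgmax : J.Nonempty → IsGreatest {v | ∃ i ∈ J, v = g i (xj, yj)} gmax)
    (hρ : ρ = if J.Nonempty ∧ 0 < Pi then -gmax / Pi else 1) :
    ∀ x ∈ X, ∀ y ∈ Yint, (∀ i, g i (x, y) ≤ 0) →
      ∀ i, g i (xj, yj) + ρ * (⟪ξ i, x - xj⟫ + ⟪η i, y - yj⟫) ≤ 0 := by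
  intro x hx y hy hfx i
  set s := ⟪ξ i, x - xj⟫ + ⟪η i, y - yj⟫ with hs
  have key : g i (xj, yj) + s ≤ 0 := by
    have h1 := hsub i x y
    have h2 := hfx i
    simp only [hs]
    linarith
  by_cases hc : J.Nonempty ∧ 0 < Pi
  · obtain ⟨hJne, hPipos⟩ := hc
    rw [hρ, if_pos ⟨hJne, hPipos⟩]
    have hgm := hgmax hJne
    have hgmax_neg : gmax < 0 := by
      obtain ⟨i0, hi0, hv⟩ := hgm.1
      rw [hJ] at hi0
      simp only [Set.mem_setOf_eq] at hi0
      linarith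
    have hρnn : 0 ≤ -gmax / Pi := div_nonneg (by linarith) hPipos.le
    by_cases hiJ : i ∈ J
    · have hsle : s ≤ Pi := (hPi hJne).2 ⟨i, hiJ, x, hx, y, hy, rfl⟩
      have h1 : (-gmax / Pi) * s ≤ (-gmax / Pi) * Pi :=
        mul_le_mul_of_nonneg_left hsle hρnn
      have h2 : (-gmax / Pi) * Pi = -gmax := div_mul_cancel₀ _ (ne_of_gt hPipos)
      have h3 : g i (xj, yj) ≤ gmax := hgm.2 ⟨i, hiJ, rfl⟩
      linarith
    · have hgi0 : g i (xj, yj) = 0 := by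
        refine le_antisymm (hfeas i) ?_
        rw [hJ] at hiJ
        simp only [Set.mem_setOf_eq, not_lt] at hiJ
        linarith
      have hsnp : s ≤ 0 := by linarith
      have : (-gmax / Pi) * s ≤ 0 := mul_nonpos_of_nonneg_of_nonpos hρnn hsnp
      linarith
  · rw [hρ, if_neg hc]
    linarith
end

section
/- Let f, g_1, …, g_m : ℝ^n × ℝ^p → ℝ be continuous convex functions, X ⊆ ℝ^n a nonempty compact convex set, and y_j ∈ ℝ^p fixed. Suppose x_j ∈ X satisfies g_i(x_j, y_j) ≤ 0 for all i, and there exist λ_1, …, λ_m ≥ 0 with λ_i g_i(x_j, y_j) = 0 for all i, a subgradient α of x ↦ f(x, y_j) at x_j, and subgradients ξ_i of x ↦ g_i(x, y_j) at x_j such that −α − Σ_{i=1}^m λ_i ξ_i ∈ N(X, x_j). Let ρ > 0. Then for any x̄ ∈ X and θ̄ ∈ ℝ satisfying f(x_j, y_j) + ⟨α, x̄ − x_j⟩ ≤ θ̄ and g_i(x_j, y_j) + ρ⟨ξ_i, x̄ − x_j⟩ ≤ 0 for all i = 1,…,m, one has θ̄ ≥ f(x_j, y_j). -/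
open RealInnerProductSpace

/-- Under the KKT conditions at `x_j`, for `ρ > 0`, any `x̄ ∈ X` and `θ̄ ∈ ℝ` satisfying
the optimality cut `f(x_j, y_j) + ⟨α, x̄ - x_j⟩ ≤ θ̄` and the cuts
`g_i(x_j, y_j) + ρ⟨ξ_i, x̄ - x_j⟩ ≤ 0` for all `i` must satisfy `θ̄ ≥ f(x_j, y_j)`. -/
theorem stmt_5 {n p m : ℕ}
    (f : Euc n × Euc p → ℝ) (g : Fin m → Euc n × Euc p → ℝ)
    (hf : ConvexOn ℝ Set.univ f) (hfc : Continuous f)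
    (hg : ∀ i, ConvexOn ℝ Set.univ (g i)) (hgc : ∀ i, Continuous (g i))
    (X : Set (Euc n)) (hXne : X.Nonempty) (hXcp : IsCompact X) (hXcv : Convex ℝ X)
    (yj : Euc p) (xj : Euc n) (hxjX : xj ∈ X)
    (hfeas : ∀ i, g i (xj, yj) ≤ 0)
    (lam : Fin m → ℝ) (hlam : ∀ i, 0 ≤ lam i)
    (hcomp : ∀ i, lam i * g i (xj, yj) = 0)
    (α : Euc n) (hα : ∀ x, f (xj, yj) + ⟪α, x - xj⟫ ≤ f (x, yj))
    (ξ : Fin m → Euc n)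
    (hξ : ∀ i, ∀ x, g i (xj, yj) + ⟪ξ i, x - xj⟫ ≤ g i (x, yj))
    (hKKT : -α - ∑ i, lam i • ξ i ∈ normalCone X xj)
    (ρ : ℝ) (hρ : 0 < ρ)
    (xb : Euc n) (hxb : xb ∈ X) (θb : ℝ)
    (hcut1 : f (xj, yj) + ⟪α, xb - xj⟫ ≤ θb)
    (hcut2 : ∀ i, g i (xj, yj) + ρ * ⟪ξ i, xb - xj⟫ ≤ 0) :
    f (xj, yj) ≤ θb := by
  have hK := hKKT xb hxb
  have hexp : ⟪-α - ∑ i, lam i • ξ i, xb - xj⟫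
      = -⟪α, xb - xj⟫ - ∑ i, lam i * ⟪ξ i, xb - xj⟫ := by
    rw [inner_sub_left, inner_neg_left, sum_inner]
    simp [real_inner_smul_left, Finset.mul_sum, mul_assoc]
  rw [hexp] at hK
  have hterm : ∀ i, lam i * ⟪ξ i, xb - xj⟫ ≤ 0 := by
    intro i
    have h2 := hcut2 i
    have hle : ⟪ξ i, xb - xj⟫ ≤ -g i (xj, yj) / ρ := by
      rw [le_div_iff₀ hρ]; nlinarith
    have := mul_le_mul_of_nonneg_left hle (hlam i)
    have hz : lam i * (-g i (xj, yj) / ρ) = 0 := by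
      have := hcomp i
      field_simp
      nlinarith [hcomp i]
    linarith
  have hsum : ∑ i, lam i * ⟪ξ i, xb - xj⟫ ≤ 0 :=
    Finset.sum_nonpos fun i _ => hterm i
  linarith
end

section
/- Consider problem (P) with Y ∩ ℤ^p finite and nonempty, and suppose that for every y_j ∈ T the following data are given: an optimal solution x_j ∈ X of NLP(y_j); multipliers λ_{j,1}, …, λ_{j,m} ≥ 0 with λ_{j,i} g_i(x_j, y_j) = 0; a subgradient α_j of x ↦ f(x, y_j) at x_j and subgradients ξ_{j,i} of x ↦ g_i(x, y_j) at x_j satisfying −α_j − Σ_{i=1}^m λ_{j,i} ξ_{j,i} ∈ N(X, x_j); vectors β_j ∈ ℝ^p and η_{j,i} ∈ ℝ^p such that (α_j, β_j) is a subgradient of f at (x_j, y_j) and (ξ_{j,i}, η_{j,i}) is a subgradient of g_i at (x_j, y_j); and the parameter ρ_j defined as in the definition of ρ_j. Consider the MILP: minimize θ over x ∈ X, y ∈ T, θ ∈ ℝ subject to, for every y_j ∈ T, f(x_j, y_j) + ⟨α_j, x − x_j⟩ + ⟨β_j, y − y_j⟩ ≤ θ and g_i(x_j, y_j) + ρ_j(⟨ξ_{j,i},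 x − x_j⟩ + ⟨η_{j,i}, y − y_j⟩) ≤ 0 for all i = 1,…,m. Then this MILP is equivalent to problem (P): both problems have the same optimal value, and if (x̄, ȳ, θ̄) is optimal for the MILP and (x₀, y₀) is optimal for (P), then θ̄ = f(x₀, y₀); moreover (x₀, y₀, f(x₀, y₀)) is an optimal solution of the MILP. -/
open RealInnerProductSpace
open scoped Classical

/-- Theorem 3.1: the MILP of (3.13) built from KKT data of the feasible subproblems
`NLP(y_j)`, `y_j ∈ T`, and the parameters `ρ_j`, is equivalent to the convex MINLP
problem (P): if `(x̄, ȳ, θ̄)` is optimal for the MILP and `(x₀, y₀)` is optimal for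
(P), then `θ̄ = f(x₀, y₀)`, and `(x₀, y₀, f(x₀, y₀))` is an optimal solution of the
MILP. -/
theorem stmt_6 {n p m : ℕ}
    (f : Euc n × Euc p → ℝ) (g : Fin m → Euc n × Euc p → ℝ)
    (hf : ConvexOn ℝ Set.univ f) (hfc : Continuous f)
    (hg : ∀ i, ConvexOn ℝ Set.univ (g i)) (hgc : ∀ i, Continuous (g i))
    (X : Set (Euc n)) (hXne : X.Nonempty) (hXcp : IsCompact X) (hXcv : Convex ℝ X)
    (Y : Set (Euc p)) (hYcl : IsClosed Y) (hYcv : Convex ℝ Y)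
    (Yint : Set (Euc p)) (hYint : Yint = {y ∈ Y | ∀ k, ∃ z : ℤ, y k = (z : ℝ)})
    (hYfin : Yint.Finite) (hYne : Yint.Nonempty)
    (T : Set (Euc p)) (hT : T = {y ∈ Yint | ∃ x ∈ X, ∀ i, g i (x, y) ≤ 0})
    -- data attached to each `y_j ∈ T`
    (xsol : Euc p → Euc n) (α : Euc p → Euc n) (β : Euc p → Euc p)
    (ξ : Euc p → Fin m → Euc n) (η : Euc p → Fin m → Euc p)
    (lam : Euc p → Fin m → ℝ) (ρ Pi gmax : Euc p → ℝ)
    -- `xsol y_j` is an optimal solution of the subproblem `NLP(y_j)`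
    (hxsolX : ∀ yj ∈ T, xsol yj ∈ X)
    (hxsolfeas : ∀ yj ∈ T, ∀ i, g i (xsol yj, yj) ≤ 0)
    (hxsolopt : ∀ yj ∈ T, ∀ x ∈ X, (∀ i, g i (x, yj) ≤ 0) → f (xsol yj, yj) ≤ f (x, yj))
    -- KKT multipliers
    (hlam : ∀ yj ∈ T, ∀ i, 0 ≤ lam yj i)
    (hcomp : ∀ yj ∈ T, ∀ i, lam yj i * g i (xsol yj, yj) = 0)
    -- subgradients of the partial functions
    (hα : ∀ yj ∈ T, ∀ x, f (xsol yj, yj) + ⟪α yj, x - xsol yj⟫ ≤ f (x, yj))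
    (hξ : ∀ yj ∈ T, ∀ i, ∀ x, g i (xsol yj, yj) + ⟪ξ yj i, x - xsol yj⟫ ≤ g i (x, yj))
    (hKKT : ∀ yj ∈ T, -α yj - ∑ i, lam yj i • ξ yj i ∈ normalCone X (xsol yj))
    -- `(α_j, β_j)` and `(ξ_{j,i}, η_{j,i})` are subgradients of `f` and `g_i`
    (hαβ : ∀ yj ∈ T, ∀ x y,
      f (xsol yj, yj) + ⟪α yj, x - xsol yj⟫ + ⟪β yj, y - yj⟫ ≤ f (x, y))
    (hξη : ∀ yj ∈ T, ∀ i, ∀ x y,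
      g i (xsol yj, yj) + ⟪ξ yj i, x - xsol yj⟫ + ⟪η yj i, y - yj⟫ ≤ g i (x, y))
    -- the parameter `ρ_j` of (3.14)
    (hPi : ∀ yj ∈ T, {i | g i (xsol yj, yj) < 0}.Nonempty → IsGreatest
      {v | ∃ i, g i (xsol yj, yj) < 0 ∧ ∃ x ∈ X, ∃ y ∈ Yint,
        v = ⟪ξ yj i, x - xsol yj⟫ + ⟪η yj i, y - yj⟫} (Pi yj))
    (hgmax : ∀ yj ∈ T, {i | g i (xsol yj, yj) < 0}.Nonempty → IsGreatest
      {v | ∃ i, g i (xsol yj, yj) < 0 ∧ v = g i (xsol yj, yj)} (gmax yj))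
    (hρ : ∀ yj ∈ T, ρ yj =
      if {i | g i (xsol yj, yj) < 0}.Nonempty ∧ 0 < Pi yj then -gmax yj / Pi yj else 1)
    -- feasibility for problem (P) and for the MILP of (3.13)
    (Pfeas : Euc n → Euc p → Prop)
    (hPfeas : ∀ x y, Pfeas x y ↔ (x ∈ X ∧ y ∈ Yint ∧ ∀ i, g i (x, y) ≤ 0))
    (Mfeas : Euc n → Euc p → ℝ → Prop)
    (hMfeas : ∀ x y θ, Mfeas x y θ ↔ (x ∈ X ∧ y ∈ T ∧
      (∀ yj ∈ T, f (xsol yj, yj) + ⟪α yj, x - xsol yj⟫ + ⟪β yj, y - yj⟫ ≤ θ) ∧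
      (∀ yj ∈ T, ∀ i,
        g i (xsol yj, yj) + ρ yj * (⟪ξ yj i, x - xsol yj⟫ + ⟪η yj i, y - yj⟫) ≤ 0)))
    -- optimal solutions of the MILP and of (P)
    (xb : Euc n) (yb : Euc p) (θb : ℝ)
    (hMopt : Mfeas xb yb θb ∧ ∀ x y θ, Mfeas x y θ → θb ≤ θ)
    (x₀ : Euc n) (y₀ : Euc p)
    (hPopt : Pfeas x₀ y₀ ∧ ∀ x y, Pfeas x y → f (x₀, y₀) ≤ f (x, y)) :
    θb = f (x₀, y₀) ∧
    Mfeas x₀ y₀ (f (x₀, y₀)) ∧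
    (∀ x y θ, Mfeas x y θ → f (x₀, y₀) ≤ θ) := by

  obtain ⟨hMfb, hMoptle⟩ := hMopt
  obtain ⟨hPf0, hPoptle⟩ := hPopt
  rw [hPfeas] at hPf0
  obtain ⟨hx₀X, hy₀Y, hg₀⟩ := hPf0
  have hy₀T : y₀ ∈ T := by rw [hT]; exact ⟨hy₀Y, x₀, hx₀X, hg₀⟩
  have hρpos : ∀ yj ∈ T, 0 < ρ yj := by
    intro yj hyj
    rw [hρ yj hyj]
    split
    · rename_i h
      obtain ⟨hne, hPipos⟩ := h
      have hgm := hgmax yj hyj hne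
      obtain ⟨i, hgi, hgeq⟩ := hgm.1
      have : gmax yj < 0 := hgeq ▸ hgi
      exact div_pos (by linarith) hPipos
    · norm_num
  -- feasibility of (x₀, y₀, f (x₀, y₀)) for the MILP
  have hM0 : Mfeas x₀ y₀ (f (x₀, y₀)) := by
    rw [hMfeas]
    refine ⟨hx₀X, hy₀T, fun yj hyj => hαβ yj hyj x₀ y₀, fun yj hyj i => ?_⟩
    set D := ⟪ξ yj i, x₀ - xsol yj⟫ + ⟪η yj i, y₀ - yj⟫ with hD
    have hsub : g i (xsol yj, yj) + D ≤ 0 := by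
      have := hξη yj hyj i x₀ y₀
      have := hg₀ i
      rw [hD]; linarith
    rw [hρ yj hyj]
    split
    · rename_i h
      obtain ⟨hne, hPipos⟩ := h
      have hgm := hgmax yj hyj hne
      have hPig := hPi yj hyj hne
      obtain ⟨i', hgi', hgeq'⟩ := hgm.1
      have hgmneg : gmax yj < 0 := hgeq' ▸ hgi'
      have hρv : 0 < -gmax yj / Pi yj := div_pos (by linarith) hPipos
      by_cases hcase : g i (xsol yj, yj) < 0
      · have hDle : D ≤ Pi yj := hPig.2 ⟨i, hcase, x₀, hx₀X, y₀, hy₀Y, rfl⟩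
        have hgle : g i (xsol yj, yj) ≤ gmax yj := hgm.2 ⟨i, hcase, rfl⟩
        have h1 : -gmax yj / Pi yj * D ≤ -gmax yj / Pi yj * Pi yj :=
          mul_le_mul_of_nonneg_left hDle (le_of_lt hρv)
        have h2 : -gmax yj / Pi yj * Pi yj = -gmax yj := by
          field_simp
        linarith
      · have hgz : g i (xsol yj, yj) = 0 :=
          le_antisymm (hxsolfeas yj hyj i) (not_lt.mp hcase)
        have hDle : D ≤ 0 := by linarith
        have : -gmax yj / Pi yj * D ≤ 0 :=
          mul_nonpos_of_nonneg_of_nonpos (le_of_lt hρv) hDle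
        linarith
    · linarith
  -- every MILP-feasible point has θ ≥ f (x₀, y₀)
  have h3 : ∀ x y θ, Mfeas x y θ → f (x₀, y₀) ≤ θ := by
    intro x y θ hM
    rw [hMfeas] at hM
    obtain ⟨hxX, hyT, h1, h2⟩ := hM
    have hρy := hρpos y hyT
    set v := x - xsol y with hv
    have hgle : ∀ i, lam y i * ⟪ξ y i, v⟫ ≤ 0 := by
      intro i
      have hc := h2 y hyT i
      simp only [sub_self, inner_zero_right, add_zero] at hc
      -- hc : g i (xsol y, y) + ρ y * ⟪ξ y i, v⟫ ≤ 0
      have hξle : ρ y * ⟪ξ y i, v⟫ ≤ -g i (xsol y, y) := by linarith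
      have hl := hlam y hyT i
      have hcm := hcomp y hyT i
      have := mul_le_mul_of_nonneg_left hξle hl
      -- lam * (ρ * ⟪ξ,v⟫) ≤ lam * (-g) = -(lam * g) = 0
      have h0 : lam y i * -g i (xsol y, y) = 0 := by
        rw [mul_neg, hcm, neg_zero]
      nlinarith
    have hsum : ∑ i, lam y i * ⟪ξ y i, v⟫ ≤ 0 :=
      Finset.sum_nonpos fun i _ => hgle i
    have hkkt := hKKT y hyT x hxX
    rw [inner_sub_left, inner_neg_left, sum_inner] at hkkt
    simp only [real_inner_smul_left] at hkkt
    have hαnn : (0:ℝ) ≤ ⟪α y, v⟫ := by rw [hv]; linarith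
    have hf1 := h1 y hyT
    simp only [sub_self, inner_zero_right, add_zero] at hf1
    have hfs : f (x₀, y₀) ≤ f (xsol y, y) := by
      apply hPoptle
      rw [hPfeas]
      have hyY : y ∈ Yint := by rw [hT] at hyT; exact hyT.1
      exact ⟨hxsolX y hyT, hyY, hxsolfeas y hyT⟩
    rw [← hv] at hf1
    linarith
  exact ⟨le_antisymm (hMoptle _ _ _ hM0) (h3 _ _ _ hMfb), hM0, h3⟩
end

section
/- Let g_1, …, g_m : ℝ^n × ℝ^p → ℝ be continuous convex functions, X ⊆ ℝ^n a nonempty compact convex set, and y_l ∈ ℝ^p such that there is no x ∈ X with g_i(x, y_l) ≤ 0 for all i = 1,…,m. Let x_l ∈ X minimize x ↦ Σ_{i=1}^m max{g_i(x, y_l), 0} over X, and suppose there exist multipliers λ_{l,i} with λ_{l,i} = 0 whenever g_i(x_l, y_l) < 0, λ_{l,i} = 1 whenever g_i(x_l, y_l) > 0, and λ_{l,i} ∈ [0, 1] whenever g_i(x_l, y_l) = 0, together with subgradients ξ_{l,i} of x ↦ g_i(x, y_l) at x_l such that −Σ_{i=1}^m λ_{l,i} ξ_{l,i} ∈ N(X,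 x_l). Then there is no x ∈ X satisfying g_i(x_l, y_l) + ⟨ξ_{l,i}, x − x_l⟩ ≤ 0 for all i = 1,…,m; that is, the linear cuts g_i(x_l, y_l) + ⟨ξ_{l,i}, x − x_l⟩ + ⟨η_{l,i}, y − y_l⟩ ≤ 0 (i = 1,…,m), x ∈ X, exclude the infeasible integer assignment y = y_l. -/
open RealInnerProductSpace

/-- Proposition 3.3: if `NLP(y_l)` is infeasible, `x_l` minimizes the penalty
`Σ_i max{g_i(·, y_l), 0}` over `X`, and multipliers/subgradients satisfy the
stationarity condition, then no `x ∈ X` satisfies the linear cuts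
`g_i(x_l, y_l) + ⟨ξ_{l,i}, x - x_l⟩ ≤ 0` for all `i`; i.e. the cuts exclude `y_l`. -/
theorem stmt_7 {n p m : ℕ}
    (g : Fin m → Euc n × Euc p → ℝ)
    (hg : ∀ i, ConvexOn ℝ Set.univ (g i)) (hgc : ∀ i, Continuous (g i))
    (X : Set (Euc n)) (hXne : X.Nonempty) (hXcp : IsCompact X) (hXcv : Convex ℝ X)
    (yl : Euc p)
    (hinfeas : ¬ ∃ x ∈ X, ∀ i, g i (x, yl) ≤ 0)
    (xl : Euc n) (hxlX : xl ∈ X)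
    (hxlmin : ∀ x ∈ X, ∑ i, max (g i (xl, yl)) 0 ≤ ∑ i, max (g i (x, yl)) 0)
    (lam : Fin m → ℝ)
    (hlam0 : ∀ i, g i (xl, yl) < 0 → lam i = 0)
    (hlam1 : ∀ i, 0 < g i (xl, yl) → lam i = 1)
    (hlam01 : ∀ i, g i (xl, yl) = 0 → lam i ∈ Set.Icc (0 : ℝ) 1)
    (ξ : Fin m → Euc n)
    (hξ : ∀ i, ∀ x, g i (xl, yl) + ⟪ξ i, x - xl⟫ ≤ g i (x, yl))
    (hstat : -∑ i, lam i • ξ i ∈ normalCone X xl) :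
    ¬ ∃ x ∈ X, ∀ i, g i (xl, yl) + ⟪ξ i, x - xl⟫ ≤ 0 := by
  rintro ⟨x, hxX, hcut⟩
  push_neg at hinfeas
  obtain ⟨i0, hi0⟩ := hinfeas xl hxlX
  have hlamnn : ∀ i, 0 ≤ lam i := by
    intro i
    rcases lt_trichotomy (g i (xl, yl)) 0 with h | h | h
    · rw [hlam0 i h]
    · exact (hlam01 i h).1
    · rw [hlam1 i h]; exact zero_le_one
  have key : ∀ i, max (g i (xl, yl)) 0 = lam i * g i (xl, yl) := by
    intro i
    rcases lt_trichotomy (g i (xl, yl)) 0 with h | h | h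
    · rw [hlam0 i h, zero_mul, max_eq_right h.le]
    · rw [h, mul_zero, max_self]
    · rw [hlam1 i h, one_mul, max_eq_left h.le]
  have hpos : 0 < ∑ i, max (g i (xl, yl)) 0 := by
    apply Finset.sum_pos' (fun i _ => le_max_right _ _)
    exact ⟨i0, Finset.mem_univ i0, lt_max_of_lt_left hi0⟩
  have hstat' := hstat x hxX
  have hinner : ⟪-∑ i, lam i • ξ i, x - xl⟫ = -∑ i, lam i * ⟪ξ i, x - xl⟫ := by
    rw [inner_neg_left, sum_inner]
    simp [real_inner_smul_left, Finset.mul_sum, mul_assoc]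
  rw [hinner, neg_nonpos] at hstat'
  have h1 : ∑ i, lam i * (g i (xl, yl) + ⟪ξ i, x - xl⟫) ≤ 0 :=
    Finset.sum_nonpos fun i _ => mul_nonpos_of_nonneg_of_nonpos (hlamnn i) (hcut i)
  have : ∑ i, max (g i (xl, yl)) 0 ≤ 0 := by
    calc ∑ i, max (g i (xl, yl)) 0
        = ∑ i, lam i * (g i (xl, yl) + ⟪ξ i, x - xl⟫) - ∑ i, lam i * ⟪ξ i, x - xl⟫ := by
          rw [← Finset.sum_sub_distrib]
          exact Finset.sum_congr rfl fun i _ => by rw [key i]; ring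
      _ ≤ 0 := by linarith
  linarith
end

section
/- Consider problem (P) with Y ∩ ℤ^p finite and nonempty. Suppose that for every y_j ∈ T the following data are given: an optimal solution x_j ∈ X of NLP(y_j); multipliers λ_{j,i} ≥ 0 with λ_{j,i} g_i(x_j, y_j) = 0; a subgradient α_j of x ↦ f(x, y_j) at x_j and subgradients ξ_{j,i} of x ↦ g_i(x, y_j) at x_j with −α_j − Σ_i λ_{j,i} ξ_{j,i} ∈ N(X, x_j); vectors β_j, η_{j,i} ∈ ℝ^p with (α_j, β_j) a subgradient of f at (x_j, y_j) and (ξ_{j,i}, η_{j,i}) a subgradient of g_i at (x_j, y_j); and ρ_j defined as in the definition of ρ_j. Suppose also that for every y_l ∈ S there are given a minimizer x_l ∈ X of x ↦ Σ_i max{g_i(x, y_l), 0} over X, multipliers λ_{l,i} equal to 0 if g_i(x_l, y_l) < 0, equal to 1 if g_i(x_l, y_l) > 0, and in [0,1] if g_i(x_l, y_l) = 0, and subgradients ξ_{l,i} of x ↦ g_i(x, y_l) at x_l with −Σ_i λ_{l,i} ξ_{l,i} ∈ N(X, x_l), together with η_{l,i} ∈ ℝ^p such that (ξ_{l,i}, η_{l,i})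 is a subgradient of g_i at (x_l, y_l). Consider the MILP master program (MP): minimize θ over x ∈ X, y ∈ Y ∩ ℤ^p, θ ∈ ℝ subject to f(x_j, y_j) + ⟨α_j, x − x_j⟩ + ⟨β_j, y − y_j⟩ ≤ θ for all y_j ∈ T; g_i(x_j, y_j) + ρ_j(⟨ξ_{j,i}, x − x_j⟩ + ⟨η_{j,i}, y − y_j⟩) ≤ 0 for all i and all y_j ∈ T; and g_i(x_l, y_l) + ⟨ξ_{l,i}, x − x_l⟩ + ⟨η_{l,i}, y − y_l⟩ ≤ 0 for all i and all y_l ∈ S. Then (MP) is equivalent to problem (P): both have the same optimal value, and if (x̄, ȳ, θ̄) is optimal for (MP) and (x₀, y₀) is optimal for (P), then θ̄ = f(x₀, y₀); moreover (x₀, y₀, f(x₀, y₀)) is an optimal solution of (MP). -/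
open RealInnerProductSpace
open scoped Classical

/-- Theorem 3.2: the MILP master program (MP), built from KKT data of the feasible
subproblems `NLP(y_j)` for `y_j ∈ T` (with parameters `ρ_j`) and from feasibility-cut
data for the infeasible integers `y_l ∈ S`, is equivalent to the convex MINLP problem
(P): if `(x̄, ȳ, θ̄)` is optimal for (MP) and `(x₀, y₀)` is optimal for (P), then
`θ̄ = f(x₀, y₀)`, and `(x₀, y₀, f(x₀, y₀))` is an optimal solution of (MP). -/
theorem stmt_8 {n p m : ℕ}
    (f : Euc n × Euc p → ℝ) (g : Fin m → Euc n × Euc p → ℝ)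
    (hf : ConvexOn ℝ Set.univ f) (hfc : Continuous f)
    (hg : ∀ i, ConvexOn ℝ Set.univ (g i)) (hgc : ∀ i, Continuous (g i))
    (X : Set (Euc n)) (hXne : X.Nonempty) (hXcp : IsCompact X) (hXcv : Convex ℝ X)
    (Y : Set (Euc p)) (hYcl : IsClosed Y) (hYcv : Convex ℝ Y)
    (Yint : Set (Euc p)) (hYint : Yint = {y ∈ Y | ∀ k, ∃ z : ℤ, y k = (z : ℝ)})
    (hYfin : Yint.Finite) (hYne : Yint.Nonempty)
    (T : Set (Euc p)) (hT : T = {y ∈ Yint | ∃ x ∈ X, ∀ i, g i (x, y) ≤ 0})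
    (S : Set (Euc p)) (hS : S = {y ∈ Yint | ¬ ∃ x ∈ X, ∀ i, g i (x, y) ≤ 0})
    -- data attached to each `y_j ∈ T`
    (xsol : Euc p → Euc n) (α : Euc p → Euc n) (β : Euc p → Euc p)
    (ξ : Euc p → Fin m → Euc n) (η : Euc p → Fin m → Euc p)
    (lam : Euc p → Fin m → ℝ) (ρ Pi gmax : Euc p → ℝ)
    (hxsolX : ∀ yj ∈ T, xsol yj ∈ X)
    (hxsolfeas : ∀ yj ∈ T, ∀ i, g i (xsol yj, yj) ≤ 0)
    (hxsolopt : ∀ yj ∈ T, ∀ x ∈ X, (∀ i, g i (x, yj) ≤ 0) → f (xsol yj, yj) ≤ f (x, yj))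
    (hlam : ∀ yj ∈ T, ∀ i, 0 ≤ lam yj i)
    (hcomp : ∀ yj ∈ T, ∀ i, lam yj i * g i (xsol yj, yj) = 0)
    (hα : ∀ yj ∈ T, ∀ x, f (xsol yj, yj) + ⟪α yj, x - xsol yj⟫ ≤ f (x, yj))
    (hξ : ∀ yj ∈ T, ∀ i, ∀ x, g i (xsol yj, yj) + ⟪ξ yj i, x - xsol yj⟫ ≤ g i (x, yj))
    (hKKT : ∀ yj ∈ T, -α yj - ∑ i, lam yj i • ξ yj i ∈ normalCone X (xsol yj))
    (hαβ : ∀ yj ∈ T, ∀ x y,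
      f (xsol yj, yj) + ⟪α yj, x - xsol yj⟫ + ⟪β yj, y - yj⟫ ≤ f (x, y))
    (hξη : ∀ yj ∈ T, ∀ i, ∀ x y,
      g i (xsol yj, yj) + ⟪ξ yj i, x - xsol yj⟫ + ⟪η yj i, y - yj⟫ ≤ g i (x, y))
    (hPi : ∀ yj ∈ T, {i | g i (xsol yj, yj) < 0}.Nonempty → IsGreatest
      {v | ∃ i, g i (xsol yj, yj) < 0 ∧ ∃ x ∈ X, ∃ y ∈ Yint,
        v = ⟪ξ yj i, x - xsol yj⟫ + ⟪η yj i, y - yj⟫} (Pi yj))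
    (hgmax : ∀ yj ∈ T, {i | g i (xsol yj, yj) < 0}.Nonempty → IsGreatest
      {v | ∃ i, g i (xsol yj, yj) < 0 ∧ v = g i (xsol yj, yj)} (gmax yj))
    (hρ : ∀ yj ∈ T, ρ yj =
      if {i | g i (xsol yj, yj) < 0}.Nonempty ∧ 0 < Pi yj then -gmax yj / Pi yj else 1)
    -- data attached to each `y_l ∈ S`
    (xsolS : Euc p → Euc n) (lamS : Euc p → Fin m → ℝ)
    (ξS : Euc p → Fin m → Euc n) (ηS : Euc p → Fin m → Euc p)
    (hxsolSX : ∀ yl ∈ S, xsolS yl ∈ X)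
    (hxsolSmin : ∀ yl ∈ S, ∀ x ∈ X,
      ∑ i, max (g i (xsolS yl, yl)) 0 ≤ ∑ i, max (g i (x, yl)) 0)
    (hlamS0 : ∀ yl ∈ S, ∀ i, g i (xsolS yl, yl) < 0 → lamS yl i = 0)
    (hlamS1 : ∀ yl ∈ S, ∀ i, 0 < g i (xsolS yl, yl) → lamS yl i = 1)
    (hlamS01 : ∀ yl ∈ S, ∀ i, g i (xsolS yl, yl) = 0 → lamS yl i ∈ Set.Icc (0 : ℝ) 1)
    (hξS : ∀ yl ∈ S, ∀ i, ∀ x,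
      g i (xsolS yl, yl) + ⟪ξS yl i, x - xsolS yl⟫ ≤ g i (x, yl))
    (hstatS : ∀ yl ∈ S, -∑ i, lamS yl i • ξS yl i ∈ normalCone X (xsolS yl))
    (hξηS : ∀ yl ∈ S, ∀ i, ∀ x y,
      g i (xsolS yl, yl) + ⟪ξS yl i, x - xsolS yl⟫ + ⟪ηS yl i, y - yl⟫ ≤ g i (x, y))
    -- feasibility for problem (P) and for the master program (MP)
    (Pfeas : Euc n → Euc p → Prop)
    (hPfeas : ∀ x y, Pfeas x y ↔ (x ∈ X ∧ y ∈ Yint ∧ ∀ i, g i (x, y) ≤ 0))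
    (MPfeas : Euc n → Euc p → ℝ → Prop)
    (hMPfeas : ∀ x y θ, MPfeas x y θ ↔ (x ∈ X ∧ y ∈ Yint ∧
      (∀ yj ∈ T, f (xsol yj, yj) + ⟪α yj, x - xsol yj⟫ + ⟪β yj, y - yj⟫ ≤ θ) ∧
      (∀ yj ∈ T, ∀ i,
        g i (xsol yj, yj) + ρ yj * (⟪ξ yj i, x - xsol yj⟫ + ⟪η yj i, y - yj⟫) ≤ 0) ∧
      (∀ yl ∈ S, ∀ i,
        g i (xsolS yl, yl) + ⟪ξS yl i, x - xsolS yl⟫ + ⟪ηS yl i, y - yl⟫ ≤ 0)))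
    -- optimal solutions of (MP) and of (P)
    (xb : Euc n) (yb : Euc p) (θb : ℝ)
    (hMPopt : MPfeas xb yb θb ∧ ∀ x y θ, MPfeas x y θ → θb ≤ θ)
    (x₀ : Euc n) (y₀ : Euc p)
    (hPopt : Pfeas x₀ y₀ ∧ ∀ x y, Pfeas x y → f (x₀, y₀) ≤ f (x, y)) :
    θb = f (x₀, y₀) ∧
    MPfeas x₀ y₀ (f (x₀, y₀)) ∧
    (∀ x y θ, MPfeas x y θ → f (x₀, y₀) ≤ θ) := by

  -- ρ is always positive
  have ρpos : ∀ yj ∈ T, 0 < ρ yj := by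
    intro yj hyj
    rw [hρ yj hyj]
    split_ifs with h
    · obtain ⟨hJ, hPipos⟩ := h
      obtain ⟨i, hi, hg0⟩ := (hgmax yj hyj hJ).1
      have : gmax yj < 0 := hg0 ▸ hi
      exact div_pos (by linarith) hPipos
    · exact one_pos
  -- the ρ-scaled mixed cuts are valid for any feasible point of (P)
  have hcut : ∀ yj ∈ T, ∀ i, ∀ x ∈ X, ∀ y ∈ Yint, (∀ i', g i' (x, y) ≤ 0) →
      g i (xsol yj, yj) + ρ yj * (⟪ξ yj i, x - xsol yj⟫ + ⟪η yj i, y - yj⟫) ≤ 0 := by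
    intro yj hyj i x hx y hy hfeas
    set D := ⟪ξ yj i, x - xsol yj⟫ + ⟪η yj i, y - yj⟫ with hD
    have hbase : g i (xsol yj, yj) + D ≤ 0 := by
      have := hξη yj hyj i x y
      have := hfeas i
      linarith
    have hgle : g i (xsol yj, yj) ≤ 0 := hxsolfeas yj hyj i
    rw [hρ yj hyj]
    split_ifs with h
    · obtain ⟨hJ, hPipos⟩ := h
      obtain ⟨i', hi', hg0⟩ := (hgmax yj hyj hJ).1
      have hgmaxneg : gmax yj < 0 := hg0 ▸ hi'
      by_cases hDpos : 0 < D
      · by_cases hiJ : g i (xsol yj, yj) < 0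
        · have hDPi : D ≤ Pi yj := (hPi yj hyj hJ).2 ⟨i, hiJ, x, hx, y, hy, rfl⟩
          have hgimax : g i (xsol yj, yj) ≤ gmax yj := (hgmax yj hyj hJ).2 ⟨i, hiJ, rfl⟩
          have hρnn : 0 ≤ -gmax yj / Pi yj := le_of_lt (div_pos (by linarith) hPipos)
          have h1 : -gmax yj / Pi yj * D ≤ -gmax yj / Pi yj * Pi yj :=
            mul_le_mul_of_nonneg_left hDPi hρnn
          have h2 : -gmax yj / Pi yj * Pi yj = -gmax yj :=
            div_mul_cancel₀ _ (ne_of_gt hPipos)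
          linarith
        · have : g i (xsol yj, yj) = 0 := le_antisymm hgle (not_lt.mp hiJ)
          linarith
      · have hρnn : 0 ≤ -gmax yj / Pi yj := le_of_lt (div_pos (by linarith) hPipos)
        have : -gmax yj / Pi yj * D ≤ 0 := mul_nonpos_of_nonneg_of_nonpos hρnn (not_lt.mp hDpos)
        linarith
    · linarith
  -- (x₀, y₀, f(x₀,y₀)) is MP-feasible
  have hPx₀ := (hPfeas x₀ y₀).mp hPopt.1
  obtain ⟨hx₀X, hy₀Y, hx₀g⟩ := hPx₀
  have hMPf₀ : MPfeas x₀ y₀ (f (x₀, y₀)) := by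
    rw [hMPfeas]
    refine ⟨hx₀X, hy₀Y, ?_, ?_, ?_⟩
    · intro yj hyj; exact hαβ yj hyj x₀ y₀
    · intro yj hyj i; exact hcut yj hyj i x₀ hx₀X y₀ hy₀Y hx₀g
    · intro yl hyl i
      have := hξηS yl hyl i x₀ y₀
      have := hx₀g i
      linarith
  -- lower bound: every MP-feasible θ is at least f(x₀,y₀)
  have hlb : ∀ x y θ, MPfeas x y θ → f (x₀, y₀) ≤ θ := by
    intro x y θ h
    rw [hMPfeas] at h
    obtain ⟨hxX, hyY, hoptc, hmix, hfcut⟩ := h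
    by_cases hyT : ∃ x' ∈ X, ∀ i, g i (x', y) ≤ 0
    · have hyTmem : y ∈ T := by rw [hT]; exact ⟨hyY, hyT⟩
      -- each λ_i ⟪ξ_i, x - xsol y⟫ ≤ 0
      have hterm : ∀ i, lam y i * ⟪ξ y i, x - xsol y⟫ ≤ 0 := by
        intro i
        have hm := hmix y hyTmem i
        rw [sub_self, inner_zero_right, add_zero] at hm
        have hρp := ρpos y hyTmem
        have hc := hcomp y hyTmem i
        have hlamnn := hlam y hyTmem i
        have h1 : lam y i * (g i (xsol y, y) + ρ y * ⟪ξ y i, x - xsol y⟫) ≤ 0 :=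
          mul_nonpos_of_nonneg_of_nonpos hlamnn hm
        have h2 : ρ y * (lam y i * ⟪ξ y i, x - xsol y⟫) ≤ 0 := by ring_nf; nlinarith
        nlinarith
      have hsum : ∑ i, lam y i * ⟪ξ y i, x - xsol y⟫ ≤ 0 :=
        Finset.sum_nonpos fun i _ => hterm i
      have hK := hKKT y hyTmem x hxX
      rw [inner_sub_left, inner_neg_left, sum_inner] at hK
      simp_rw [real_inner_smul_left] at hK
      have hα0 : 0 ≤ ⟪α y, x - xsol y⟫ := by linarith
      have hoc := hoptc y hyTmem
      rw [sub_self, inner_zero_right, add_zero] at hoc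
      have hPfxsol : Pfeas (xsol y) y := by
        rw [hPfeas]; exact ⟨hxsolX y hyTmem, hyY, hxsolfeas y hyTmem⟩
      have := hPopt.2 (xsol y) y hPfxsol
      linarith
    · exfalso
      have hyS : y ∈ S := by rw [hS]; exact ⟨hyY, hyT⟩
      have hxsX := hxsolSX y hyS
      obtain ⟨i₀, hi₀⟩ : ∃ i, 0 < g i (xsolS y, y) := by
        by_contra hcon
        push_neg at hcon
        exact hyT ⟨xsolS y, hxsX, hcon⟩
      -- sum of λ g over i equals sum of max, which is positive
      have hterm : ∀ i, lamS y i * (g i (xsolS y, y) + ⟪ξS y i, x - xsolS y⟫) ≤ 0 := by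
        intro i
        have hfc := hfcut y hyS i
        rw [sub_self, inner_zero_right, add_zero] at hfc
        have hlamnnnn : 0 ≤ lamS y i := by
          rcases lt_trichotomy (g i (xsolS y, y)) 0 with h | h | h
          · rw [hlamS0 y hyS i h]
          · exact (hlamS01 y hyS i h).1
          · rw [hlamS1 y hyS i h]; norm_num
        exact mul_nonpos_of_nonneg_of_nonpos hlamnnnn hfc
      have hsum : ∑ i, lamS y i * (g i (xsolS y, y) + ⟪ξS y i, x - xsolS y⟫) ≤ 0 :=
        Finset.sum_nonpos fun i _ => hterm i
      have hK := hstatS y hyS x hxX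
      rw [inner_neg_left, sum_inner] at hK
      simp_rw [real_inner_smul_left] at hK
      have hsum2 : ∑ i, lamS y i * g i (xsolS y, y) ≤ 0 := by
        have hexp : ∀ i ∈ Finset.univ, lamS y i * (g i (xsolS y, y) + ⟪ξS y i, x - xsolS y⟫)
            = lamS y i * g i (xsolS y, y) + lamS y i * ⟪ξS y i, x - xsolS y⟫ := by
          intro i _; ring
        rw [Finset.sum_congr rfl hexp, Finset.sum_add_distrib] at hsum
        linarith
      have heq : ∀ i, lamS y i * g i (xsolS y, y) = max (g i (xsolS y, y)) 0 := by
        intro i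
        rcases lt_trichotomy (g i (xsolS y, y)) 0 with h | h | h
        · rw [hlamS0 y hyS i h, max_eq_right (le_of_lt h)]; ring
        · rw [h, max_self]; ring
        · rw [hlamS1 y hyS i h, max_eq_left (le_of_lt h)]; ring
      have hpos : 0 < ∑ i, lamS y i * g i (xsolS y, y) := by
        simp_rw [heq]
        have : (0:ℝ) < max (g i₀ (xsolS y, y)) 0 := lt_max_of_lt_left hi₀
        have hle : max (g i₀ (xsolS y, y)) 0 ≤ ∑ i, max (g i (xsolS y, y)) 0 :=
          Finset.single_le_sum (f := fun i => max (g i (xsolS y, y)) 0) (fun i _ => le_max_right _ _) (Finset.mem_univ i₀)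
        linarith
      linarith
  refine ⟨le_antisymm (hMPopt.2 x₀ y₀ _ hMPf₀) (hlb xb yb θb hMPopt.1), hMPf₀, hlb⟩
end

section
/- Let f, g_1, …, g_m : ℝ^n × ℝ^p → ℝ be continuous convex functions, X ⊆ ℝ^n a nonempty compact convex set, Y ⊆ ℝ^p a closed convex set, and let T^k and S^k be finite sets of points of Y ∩ ℤ^p. Suppose for each y_j ∈ T^k there are given x_j ∈ X with g_i(x_j, y_j) ≤ 0 for all i, multipliers λ_{j,i} ≥ 0 with λ_{j,i} g_i(x_j, y_j) = 0, a subgradient α_j of x ↦ f(x, y_j) at x_j and subgradients ξ_{j,i} of x ↦ g_i(x, y_j) at x_j with −α_j − Σ_i λ_{j,i} ξ_{j,i} ∈ N(X, x_j), vectors β_j, η_{j,i} ∈ ℝ^p with (α_j, β_j) a subgradient of f at (x_j, y_j) and (ξ_{j,i}, η_{j,i}) a subgradient of g_i at (x_j, y_j), and a parameter ρ_j > 0; and suppose for each y_l ∈ S^k there are given x_l ∈ X minimizing x ↦ Σ_i max{g_i(x, y_l), 0} over X with Σ_i max{g_i(x_l, y_l), 0} > 0, multipliers λ_{l,i} equal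 to 0 if g_i(x_l, y_l) < 0, equal to 1 if g_i(x_l, y_l) > 0, and in [0,1] if g_i(x_l, y_l) = 0, and subgradients ξ_{l,i} of x ↦ g_i(x, y_l) at x_l with −Σ_i λ_{l,i} ξ_{l,i} ∈ N(X, x_l), together with η_{l,i} ∈ ℝ^p. Let UBD^k := min_{y_j ∈ T^k} f(x_j, y_j). If (x̄, ȳ, θ̄) with x̄ ∈ X, ȳ ∈ Y ∩ ℤ^p, θ̄ ∈ ℝ satisfies θ̄ < UBD^k, the optimality cuts f(x_j, y_j) + ⟨α_j, x̄ − x_j⟩ + ⟨β_j, ȳ − y_j⟩ ≤ θ̄ and g_i(x_j, y_j) + ρ_j(⟨ξ_{j,i}, x̄ − x_j⟩ + ⟨η_{j,i}, ȳ − y_j⟩) ≤ 0 for all i and all y_j ∈ T^k, and the feasibility cuts g_i(x_l, y_l) + ⟨ξ_{l,i}, x̄ − x_l⟩ + ⟨η_{l,i}, ȳ − y_l⟩ ≤ 0 for all i and all y_l ∈ S^k, then ȳ ∉ T^k and ȳ ∉ S^k; in particular, each integer assignment is generated at most once by the outer approximation algorithm. -/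
open RealInnerProductSpace

/-- Any point `(x̄, ȳ, θ̄)` satisfying `θ̄ < UBD^k` together with all optimality cuts
(from `y_j ∈ T^k`) and feasibility cuts (from `y_l ∈ S^k`) must have
`ȳ ∉ T^k` and `ȳ ∉ S^k`; in particular each integer assignment is generated at most
once by the outer approximation algorithm. -/
theorem stmt_11 {n p m : ℕ}
    (f : Euc n × Euc p → ℝ) (g : Fin m → Euc n × Euc p → ℝ)
    (hf : ConvexOn ℝ Set.univ f) (hfc : Continuous f)
    (hg : ∀ i, ConvexOn ℝ Set.univ (g i)) (hgc : ∀ i, Continuous (g i))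
    (X : Set (Euc n)) (hXne : X.Nonempty) (hXcp : IsCompact X) (hXcv : Convex ℝ X)
    (Y : Set (Euc p)) (hYcl : IsClosed Y) (hYcv : Convex ℝ Y)
    (Yint : Set (Euc p)) (hYint : Yint = {y ∈ Y | ∀ k, ∃ z : ℤ, y k = (z : ℝ)})
    (Tk Sk : Set (Euc p)) (hTkfin : Tk.Finite) (hSkfin : Sk.Finite)
    (hTkY : Tk ⊆ Yint) (hSkY : Sk ⊆ Yint)
    -- data attached to each `y_j ∈ T^k`
    (xsol : Euc p → Euc n) (α : Euc p → Euc n) (β : Euc p → Euc p)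
    (ξ : Euc p → Fin m → Euc n) (η : Euc p → Fin m → Euc p)
    (lam : Euc p → Fin m → ℝ) (ρ : Euc p → ℝ)
    (hxsolX : ∀ yj ∈ Tk, xsol yj ∈ X)
    (hxsolfeas : ∀ yj ∈ Tk, ∀ i, g i (xsol yj, yj) ≤ 0)
    (hlam : ∀ yj ∈ Tk, ∀ i, 0 ≤ lam yj i)
    (hcomp : ∀ yj ∈ Tk, ∀ i, lam yj i * g i (xsol yj, yj) = 0)
    (hα : ∀ yj ∈ Tk, ∀ x, f (xsol yj, yj) + ⟪α yj, x - xsol yj⟫ ≤ f (x, yj))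
    (hξ : ∀ yj ∈ Tk, ∀ i, ∀ x, g i (xsol yj, yj) + ⟪ξ yj i, x - xsol yj⟫ ≤ g i (x, yj))
    (hKKT : ∀ yj ∈ Tk, -α yj - ∑ i, lam yj i • ξ yj i ∈ normalCone X (xsol yj))
    (hαβ : ∀ yj ∈ Tk, ∀ x y,
      f (xsol yj, yj) + ⟪α yj, x - xsol yj⟫ + ⟪β yj, y - yj⟫ ≤ f (x, y))
    (hξη : ∀ yj ∈ Tk, ∀ i, ∀ x y,
      g i (xsol yj, yj) + ⟪ξ yj i, x - xsol yj⟫ + ⟪η yj i, y - yj⟫ ≤ g i (x, y))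
    (hρ : ∀ yj ∈ Tk, 0 < ρ yj)
    -- data attached to each `y_l ∈ S^k`
    (xsolS : Euc p → Euc n) (lamS : Euc p → Fin m → ℝ)
    (ξS : Euc p → Fin m → Euc n) (ηS : Euc p → Fin m → Euc p)
    (hxsolSX : ∀ yl ∈ Sk, xsolS yl ∈ X)
    (hxsolSmin : ∀ yl ∈ Sk, ∀ x ∈ X,
      ∑ i, max (g i (xsolS yl, yl)) 0 ≤ ∑ i, max (g i (x, yl)) 0)
    (hxsolSpos : ∀ yl ∈ Sk, 0 < ∑ i, max (g i (xsolS yl, yl)) 0)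
    (hlamS0 : ∀ yl ∈ Sk, ∀ i, g i (xsolS yl, yl) < 0 → lamS yl i = 0)
    (hlamS1 : ∀ yl ∈ Sk, ∀ i, 0 < g i (xsolS yl, yl) → lamS yl i = 1)
    (hlamS01 : ∀ yl ∈ Sk, ∀ i, g i (xsolS yl, yl) = 0 → lamS yl i ∈ Set.Icc (0 : ℝ) 1)
    (hξS : ∀ yl ∈ Sk, ∀ i, ∀ x,
      g i (xsolS yl, yl) + ⟪ξS yl i, x - xsolS yl⟫ ≤ g i (x, yl))
    (hstatS : ∀ yl ∈ Sk, -∑ i, lamS yl i • ξS yl i ∈ normalCone X (xsolS yl))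
    -- the upper bound `UBD^k = min_{y_j ∈ T^k} f(x_j, y_j)`
    (UBD : ℝ) (hUBD : IsLeast {v | ∃ yj ∈ Tk, v = f (xsol yj, yj)} UBD)
    -- the candidate point and the cuts it satisfies
    (xb : Euc n) (yb : Euc p) (θb : ℝ)
    (hxb : xb ∈ X) (hyb : yb ∈ Yint)
    (hθb : θb < UBD)
    (hcutT1 : ∀ yj ∈ Tk,
      f (xsol yj, yj) + ⟪α yj, xb - xsol yj⟫ + ⟪β yj, yb - yj⟫ ≤ θb)
    (hcutT2 : ∀ yj ∈ Tk, ∀ i,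
      g i (xsol yj, yj) + ρ yj * (⟪ξ yj i, xb - xsol yj⟫ + ⟪η yj i, yb - yj⟫) ≤ 0)
    (hcutS : ∀ yl ∈ Sk, ∀ i,
      g i (xsolS yl, yl) + ⟪ξS yl i, xb - xsolS yl⟫ + ⟪ηS yl i, yb - yl⟫ ≤ 0) :
    yb ∉ Tk ∧ yb ∉ Sk := by

  constructor
  · intro hmem
    have hUB : UBD ≤ f (xsol yb, yb) := hUBD.2 ⟨yb, hmem, rfl⟩
    have h1 := hcutT1 yb hmem
    have hαneg : ⟪α yb, xb - xsol yb⟫ < 0 := by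
      have h1' : f (xsol yb, yb) + ⟪α yb, xb - xsol yb⟫ ≤ θb := by
        simpa [sub_self, inner_zero_right] using h1
      linarith
    have hterm : ∀ i, lam yb i * ⟪ξ yb i, xb - xsol yb⟫ ≤ 0 := by
      intro i
      have h2 := hcutT2 yb hmem i
      have h2' : g i (xsol yb, yb) + ρ yb * ⟪ξ yb i, xb - xsol yb⟫ ≤ 0 := by
        simpa [sub_self, inner_zero_right] using h2
      have hl := hlam yb hmem i
      have hc := hcomp yb hmem i
      have hρ' := hρ yb hmem
      nlinarith [mul_le_mul_of_nonneg_left h2' hl]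
    have hsum : ⟪∑ i, lam yb i • ξ yb i, xb - xsol yb⟫ ≤ 0 := by
      rw [sum_inner]
      apply Finset.sum_nonpos
      intro i _
      rw [real_inner_smul_left]; exact hterm i
    have hK := hKKT yb hmem xb hxb
    have hK' : -⟪α yb, xb - xsol yb⟫ - ⟪∑ i, lam yb i • ξ yb i, xb - xsol yb⟫ ≤ 0 := by
      simpa [inner_sub_left, inner_neg_left] using hK
    linarith
  · intro hmem
    have hlpos : ∀ i, 0 ≤ lamS yb i := by
      intro i
      rcases lt_trichotomy (g i (xsolS yb, yb)) 0 with h|h|h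
      · rw [hlamS0 yb hmem i h]
      · exact (hlamS01 yb hmem i h).1
      · rw [hlamS1 yb hmem i h]; norm_num
    have hlg : ∀ i, lamS yb i * g i (xsolS yb, yb) = max (g i (xsolS yb, yb)) 0 := by
      intro i
      rcases lt_trichotomy (g i (xsolS yb, yb)) 0 with h|h|h
      · rw [hlamS0 yb hmem i h, max_eq_right h.le]; ring
      · rw [h]; simp
      · rw [hlamS1 yb hmem i h, max_eq_left h.le]; ring
    have hpos := hxsolSpos yb hmem
    have hterm : ∀ i, lamS yb i * g i (xsolS yb, yb)
        + lamS yb i * ⟪ξS yb i, xb - xsolS yb⟫ ≤ 0 := by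
      intro i
      have h := hcutS yb hmem i
      have h' : g i (xsolS yb, yb) + ⟪ξS yb i, xb - xsolS yb⟫ ≤ 0 := by
        simpa [sub_self, inner_zero_right] using h
      nlinarith [mul_le_mul_of_nonneg_left h' (hlpos i)]
    have hsum : ∑ i, lamS yb i * g i (xsolS yb, yb)
        + ∑ i, lamS yb i * ⟪ξS yb i, xb - xsolS yb⟫ ≤ 0 := by
      rw [← Finset.sum_add_distrib]
      exact Finset.sum_nonpos fun i _ => hterm i
    have hsumg : ∑ i, lamS yb i * g i (xsolS yb, yb)
        = ∑ i, max (g i (xsolS yb, yb)) 0 := Finset.sum_congr rfl fun i _ => hlg i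
    have hstat := hstatS yb hmem xb hxb
    have hstat' : -⟪∑ i, lamS yb i • ξS yb i, xb - xsolS yb⟫ ≤ 0 := by
      simpa [inner_neg_left] using hstat
    have hsi : ⟪∑ i, lamS yb i • ξS yb i, xb - xsolS yb⟫
        = ∑ i, lamS yb i * ⟪ξS yb i, xb - xsolS yb⟫ := by
      rw [sum_inner]
      exact Finset.sum_congr rfl fun i _ => real_inner_smul_left _ _ _
    rw [hsi] at hstat'
    linarith
end

section
/- Consider problem (P) with Y ∩ ℤ^p finite and nonempty, and let T^k ⊆ T and S^k ⊆ S be finite nonempty sets equipped with, for each y_j ∈ T^k, an optimal solution x_j of NLP(y_j) together with subgradient and multiplier data satisfying the KKT conditions and the parameter ρ_j defined as in the definition of ρ_j, and for each y_l ∈ S^k, a minimizer x_l of x ↦ Σ_i max{g_i(x, y_l), 0} over X together with multipliers and subgradients ξ_{l,i}, η_{l,i} satisfying the stationarity condition −Σ_i λ_{l,i} ξ_{l,i} ∈ N(X, x_l). Let UBD^k := min_{y_j ∈ T^k} f(x_j, y_j), and suppose problem (P) is feasible. If the relaxed master program MP(T^k, S^k)—minimize θ over x ∈ X, y ∈ Y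 ∩ ℤ^p, θ ∈ ℝ subject to θ < UBD^k, the optimality cuts f(x_j, y_j) + ⟨α_j, x − x_j⟩ + ⟨β_j, y − y_j⟩ ≤ θ and g_i(x_j, y_j) + ρ_j(⟨ξ_{j,i}, x − x_j⟩ + ⟨η_{j,i}, y − y_j⟩) ≤ 0 for all i, y_j ∈ T^k, and the feasibility cuts g_i(x_l, y_l) + ⟨ξ_{l,i}, x − x_l⟩ + ⟨η_{l,i}, y − y_l⟩ ≤ 0 for all i, y_l ∈ S^k—has no feasible point, then UBD^k equals the optimal value of problem (P); that is, the optimal value of (P) is attained at some (x_j, y_j) with y_j ∈ T^k. -/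
open RealInnerProductSpace
open scoped Classical

/-- If problem (P) is feasible and the relaxed master program `MP(T^k, S^k)` (with the
extra constraint `θ < UBD^k`) has no feasible point, then `UBD^k` equals the optimal
value of (P); that is, the optimal value of (P) is attained at some `(x_j, y_j)` with
`y_j ∈ T^k`. -/
theorem stmt_12 {n p m : ℕ}
    (f : Euc n × Euc p → ℝ) (g : Fin m → Euc n × Euc p → ℝ)
    (hf : ConvexOn ℝ Set.univ f) (hfc : Continuous f)
    (hg : ∀ i, ConvexOn ℝ Set.univ (g i)) (hgc : ∀ i, Continuous (g i))
    (X : Set (Euc n)) (hXne : X.Nonempty) (hXcp : IsCompact X) (hXcv : Convex ℝ X)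
    (Y : Set (Euc p)) (hYcl : IsClosed Y) (hYcv : Convex ℝ Y)
    (Yint : Set (Euc p)) (hYint : Yint = {y ∈ Y | ∀ k, ∃ z : ℤ, y k = (z : ℝ)})
    (hYfin : Yint.Finite) (hYne : Yint.Nonempty)
    (T : Set (Euc p)) (hT : T = {y ∈ Yint | ∃ x ∈ X, ∀ i, g i (x, y) ≤ 0})
    (S : Set (Euc p)) (hS : S = {y ∈ Yint | ¬ ∃ x ∈ X, ∀ i, g i (x, y) ≤ 0})
    (Tk Sk : Set (Euc p)) (hTkT : Tk ⊆ T) (hSkS : Sk ⊆ S)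
    (hTkfin : Tk.Finite) (hSkfin : Sk.Finite)
    (hTkne : Tk.Nonempty) (hSkne : Sk.Nonempty)
    -- data attached to each `y_j ∈ T^k`
    (xsol : Euc p → Euc n) (α : Euc p → Euc n) (β : Euc p → Euc p)
    (ξ : Euc p → Fin m → Euc n) (η : Euc p → Fin m → Euc p)
    (lam : Euc p → Fin m → ℝ) (ρ Pi gmax : Euc p → ℝ)
    (hxsolX : ∀ yj ∈ Tk, xsol yj ∈ X)
    (hxsolfeas : ∀ yj ∈ Tk, ∀ i, g i (xsol yj, yj) ≤ 0)
    (hxsolopt : ∀ yj ∈ Tk, ∀ x ∈ X, (∀ i, g i (x, yj) ≤ 0) → f (xsol yj, yj) ≤ f (x, yj))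
    (hlam : ∀ yj ∈ Tk, ∀ i, 0 ≤ lam yj i)
    (hcomp : ∀ yj ∈ Tk, ∀ i, lam yj i * g i (xsol yj, yj) = 0)
    (hα : ∀ yj ∈ Tk, ∀ x, f (xsol yj, yj) + ⟪α yj, x - xsol yj⟫ ≤ f (x, yj))
    (hξ : ∀ yj ∈ Tk, ∀ i, ∀ x, g i (xsol yj, yj) + ⟪ξ yj i, x - xsol yj⟫ ≤ g i (x, yj))
    (hKKT : ∀ yj ∈ Tk, -α yj - ∑ i, lam yj i • ξ yj i ∈ normalCone X (xsol yj))
    (hαβ : ∀ yj ∈ Tk, ∀ x y,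
      f (xsol yj, yj) + ⟪α yj, x - xsol yj⟫ + ⟪β yj, y - yj⟫ ≤ f (x, y))
    (hξη : ∀ yj ∈ Tk, ∀ i, ∀ x y,
      g i (xsol yj, yj) + ⟪ξ yj i, x - xsol yj⟫ + ⟪η yj i, y - yj⟫ ≤ g i (x, y))
    (hPi : ∀ yj ∈ Tk, {i | g i (xsol yj, yj) < 0}.Nonempty → IsGreatest
      {v | ∃ i, g i (xsol yj, yj) < 0 ∧ ∃ x ∈ X, ∃ y ∈ Yint,
        v = ⟪ξ yj i, x - xsol yj⟫ + ⟪η yj i, y - yj⟫} (Pi yj))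
    (hgmax : ∀ yj ∈ Tk, {i | g i (xsol yj, yj) < 0}.Nonempty → IsGreatest
      {v | ∃ i, g i (xsol yj, yj) < 0 ∧ v = g i (xsol yj, yj)} (gmax yj))
    (hρ : ∀ yj ∈ Tk, ρ yj =
      if {i | g i (xsol yj, yj) < 0}.Nonempty ∧ 0 < Pi yj then -gmax yj / Pi yj else 1)
    -- data attached to each `y_l ∈ S^k`
    (xsolS : Euc p → Euc n) (lamS : Euc p → Fin m → ℝ)
    (ξS : Euc p → Fin m → Euc n) (ηS : Euc p → Fin m → Euc p)
    (hxsolSX : ∀ yl ∈ Sk, xsolS yl ∈ X)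
    (hxsolSmin : ∀ yl ∈ Sk, ∀ x ∈ X,
      ∑ i, max (g i (xsolS yl, yl)) 0 ≤ ∑ i, max (g i (x, yl)) 0)
    (hlamS0 : ∀ yl ∈ Sk, ∀ i, g i (xsolS yl, yl) < 0 → lamS yl i = 0)
    (hlamS1 : ∀ yl ∈ Sk, ∀ i, 0 < g i (xsolS yl, yl) → lamS yl i = 1)
    (hlamS01 : ∀ yl ∈ Sk, ∀ i, g i (xsolS yl, yl) = 0 → lamS yl i ∈ Set.Icc (0 : ℝ) 1)
    (hξS : ∀ yl ∈ Sk, ∀ i, ∀ x,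
      g i (xsolS yl, yl) + ⟪ξS yl i, x - xsolS yl⟫ ≤ g i (x, yl))
    (hstatS : ∀ yl ∈ Sk, -∑ i, lamS yl i • ξS yl i ∈ normalCone X (xsolS yl))
    (hξηS : ∀ yl ∈ Sk, ∀ i, ∀ x y,
      g i (xsolS yl, yl) + ⟪ξS yl i, x - xsolS yl⟫ + ⟪ηS yl i, y - yl⟫ ≤ g i (x, y))
    -- the upper bound `UBD^k = min_{y_j ∈ T^k} f(x_j, y_j)`
    (UBD : ℝ) (hUBD : IsLeast {v | ∃ yj ∈ Tk, v = f (xsol yj, yj)} UBD)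
    -- problem (P) is feasible
    (hPfeas : ∃ x ∈ X, ∃ y ∈ Yint, ∀ i, g i (x, y) ≤ 0)
    -- the relaxed master program `MP(T^k, S^k)` has no feasible point
    (hMPinfeas : ¬ ∃ x ∈ X, ∃ y ∈ Yint, ∃ θ : ℝ, θ < UBD ∧
      (∀ yj ∈ Tk, f (xsol yj, yj) + ⟪α yj, x - xsol yj⟫ + ⟪β yj, y - yj⟫ ≤ θ) ∧
      (∀ yj ∈ Tk, ∀ i,
        g i (xsol yj, yj) + ρ yj * (⟪ξ yj i, x - xsol yj⟫ + ⟪η yj i, y - yj⟫) ≤ 0) ∧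
      (∀ yl ∈ Sk, ∀ i,
        g i (xsolS yl, yl) + ⟪ξS yl i, x - xsolS yl⟫ + ⟪ηS yl i, y - yl⟫ ≤ 0)) :
    ∃ yj ∈ Tk, f (xsol yj, yj) = UBD ∧
      IsLeast {v | ∃ x ∈ X, ∃ y ∈ Yint, (∀ i, g i (x, y) ≤ 0) ∧ v = f (x, y)}
        (f (xsol yj, yj)) := by
  obtain ⟨hUBDmem, hUBDlb⟩ := hUBD
  obtain ⟨yj, hyjTk, hUBDeq⟩ := hUBDmem
  have hyjYint : yj ∈ Yint := by
    have h := hTkT hyjTk; rw [hT] at h; exact h.1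
  -- ρ is nonnegative at every point of Tk
  have hρnn : ∀ yk ∈ Tk, 0 ≤ ρ yk := by
    intro yk hyk
    rw [hρ yk hyk]
    split_ifs with hcond
    · obtain ⟨hne, hPipos⟩ := hcond
      obtain ⟨i, hgi, hgeq⟩ := (hgmax yk hyk hne).1
      have hg0 : gmax yk < 0 := hgeq ▸ hgi
      apply div_nonneg <;> linarith
    · norm_num
  refine ⟨yj, hyjTk, hUBDeq.symm,
    ⟨xsol yj, hxsolX yj hyjTk, yj, hyjYint, hxsolfeas yj hyjTk, rfl⟩, ?_⟩
  rintro v ⟨x, hxX, y, hyY, hgf, rfl⟩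
  rw [← hUBDeq]
  by_contra hlt
  push_neg at hlt
  apply hMPinfeas
  refine ⟨x, hxX, y, hyY, f (x, y), hlt, ?_, ?_, ?_⟩
  · intro yk hyk; exact hαβ yk hyk x y
  · intro yk hyk i
    set D := ⟪ξ yk i, x - xsol yk⟫ + ⟪η yk i, y - yk⟫ with hD
    have hsub : g i (xsol yk, yk) + D ≤ g i (x, y) := by
      have := hξη yk hyk i x y; linarith
    have hgle : g i (x, y) ≤ 0 := hgf i
    have hρ0 : 0 ≤ ρ yk := hρnn yk hyk
    rcases le_or_gt D 0 with hDle | hDpos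
    · have h1 : ρ yk * D ≤ 0 := mul_nonpos_of_nonneg_of_nonpos hρ0 hDle
      have h2 : g i (xsol yk, yk) ≤ 0 := hxsolfeas yk hyk i
      linarith
    · rcases eq_or_lt_of_le (hxsolfeas yk hyk i) with hg0 | hgneg
      · -- g i (xsol yk, yk) = 0, so D ≤ g(x,y) ≤ 0, contradiction with D > 0
        exfalso; linarith
      · -- g i (xsol yk, yk) < 0
        have hne : {i' | g i' (xsol yk, yk) < 0}.Nonempty := ⟨i, hgneg⟩
        have hDmem : D ∈ {v | ∃ i', g i' (xsol yk, yk) < 0 ∧ ∃ x' ∈ X, ∃ y' ∈ Yint,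
            v = ⟪ξ yk i', x' - xsol yk⟫ + ⟪η yk i', y' - yk⟫} :=
          ⟨i, hgneg, x, hxX, y, hyY, rfl⟩
        have hDlePi : D ≤ Pi yk := (hPi yk hyk hne).2 hDmem
        have hPipos : 0 < Pi yk := lt_of_lt_of_le hDpos hDlePi
        have hρeq : ρ yk = -gmax yk / Pi yk := by
          rw [hρ yk hyk, if_pos ⟨hne, hPipos⟩]
        have hggmax : g i (xsol yk, yk) ≤ gmax yk :=
          (hgmax yk hyk hne).2 ⟨i, hgneg, rfl⟩
        obtain ⟨i', hgi', hgeq'⟩ := (hgmax yk hyk hne).1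
        have hgmaxneg : gmax yk < 0 := hgeq' ▸ hgi'
        have key : ρ yk * D ≤ -gmax yk := by
          have h1 : ρ yk * D ≤ ρ yk * Pi yk :=
            mul_le_mul_of_nonneg_left hDlePi hρ0
          have h2 : ρ yk * Pi yk = -gmax yk := by
            rw [hρeq, div_mul_cancel₀ _ (ne_of_gt hPipos)]
          linarith
        linarith
  · intro yl hyl i
    have h1 := hξηS yl hyl i x y
    have h2 := hgf i
    linarith
end
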